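/- Let $1 < u \le p < \infty$, $1 < s \le q < \infty$, $1 < v \le u$, and $R > 0$. Suppose $f \in \mathcal M_v^{\frac{v}{u}p} \cap \mathcal M_s^q$ satisfies the pointwise bound $|f(x)| \le d := c_0 R^{n/q}\|f\|_{\mathcal M_s^q}$ for all $x$ (as holds for band-limited functions with Fourier support in $\bar B(0,R)$). Then, with $p_0 = v/u$, the distribution-function argument gives $\|f\|_{\mathcal M_u^p} \le c\, R^{\frac{n}{q} - \frac{vn}{qu}}\, \|f\|_{\mathcal M_s^q}^{1 - v/u}\, \|f\|_{\mathcal M_v^{\frac{v}{u}p}}^{v/u}$, where $c$ depends only on $u, v, p, q, n, c_0$ and not on $R$ or $f$. -/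
import Mathlib


open MeasureTheory ENNReal

noncomputable section

/-- `n`-dimensional Euclidean space. -/
abbrev Eu (n : ℕ) := EuclideanSpace ℝ (Fin n)

/-- The Morrey quasi-norm `‖f‖_{M_u^p} = sup_B |B|^{1/p - 1/u} ‖f χ_B‖_{L^u}`,
the supremum taken over all balls `B ⊂ ℝ^n`. -/
def morreyNorm (n : ℕ) (u p : ℝ) (f : Eu n → ℝ) : ℝ≥0∞ :=
  ⨆ (x : Eu n) (r : ℝ) (_ : 0 < r),
    (volume (Metric.ball x r)) ^ (1 / p - 1 / u) *
      eLpNorm ((Metric.ball x r).indicator f) (ENNReal.ofReal u) volume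

lemma aux_nik {n : ℕ} {u v : ℝ} (hv : 0 < v) (hvu : v ≤ u) (g : Eu n → ℝ) (hg : Measurable g)
    (d : ℝ≥0∞) (hd : ∀ x, (‖g x‖₊ : ℝ≥0∞) ≤ d) :
    eLpNorm g (ENNReal.ofReal u) volume ≤
      d ^ (1 - v / u) * (eLpNorm g (ENNReal.ofReal v) volume) ^ (v / u) := by
  have hu : 0 < u := lt_of_lt_of_le hv hvu
  have huz : (ENNReal.ofReal u) ≠ 0 := by simp [ENNReal.ofReal_eq_zero, not_le, hu]
  have hvz : (ENNReal.ofReal v) ≠ 0 := by simp [ENNReal.ofReal_eq_zero, not_le, hv]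
  rw [eLpNorm_eq_lintegral_rpow_enorm_toReal huz ENNReal.ofReal_ne_top,
      eLpNorm_eq_lintegral_rpow_enorm_toReal hvz ENNReal.ofReal_ne_top,
      ENNReal.toReal_ofReal hu.le, ENNReal.toReal_ofReal hv.le]
  set Iv := ∫⁻ x, (‖g x‖₊ : ℝ≥0∞) ^ v with hIv
  have h1 : (∫⁻ x, (‖g x‖₊ : ℝ≥0∞) ^ u) ≤ d ^ (u - v) * Iv := by
    have hm : Measurable fun x => (‖g x‖₊ : ℝ≥0∞) ^ v :=
      (hg.nnnorm.coe_nnreal_ennreal).pow_const v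
    calc (∫⁻ x, (‖g x‖₊ : ℝ≥0∞) ^ u)
        ≤ ∫⁻ x, d ^ (u - v) * (‖g x‖₊ : ℝ≥0∞) ^ v := by
          refine lintegral_mono fun x => ?_
          have : (‖g x‖₊ : ℝ≥0∞) ^ u = (‖g x‖₊ : ℝ≥0∞) ^ (u - v) * (‖g x‖₊ : ℝ≥0∞) ^ v := by
            rw [← ENNReal.rpow_add_of_nonneg _ _ (sub_nonneg.2 hvu) hv.le, sub_add_cancel]
          rw [this]
          exact mul_le_mul_left (ENNReal.rpow_le_rpow (hd x) (sub_nonneg.2 hvu)) _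
      _ = d ^ (u - v) * Iv := lintegral_const_mul _ hm
  calc (∫⁻ x, (‖g x‖₊ : ℝ≥0∞) ^ u) ^ (1 / u)
      ≤ (d ^ (u - v) * Iv) ^ (1 / u) := ENNReal.rpow_le_rpow h1 (by positivity)
    _ = d ^ (1 - v / u) * (Iv ^ (1 / v)) ^ (v / u) := by
        rw [ENNReal.mul_rpow_of_nonneg _ _ (by positivity), ← ENNReal.rpow_mul,
          ← ENNReal.rpow_mul]
        congr 2
        · field_simp
        · field_simp

/-- Plancherel–Polya–Nikolskij type inequality in Morrey spaces: under the
pointwise bound `|f| ≤ c₀ R^{n/q} ‖f‖_{M_s^q}` (as holds for functions with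
Fourier support in `B̄(0,R)`) one has
`‖f‖_{M_u^p} ≤ c R^{n/q - vn/(qu)} ‖f‖_{M_s^q}^{1-v/u} ‖f‖_{M_v^{(v/u)p}}^{v/u}`
with `c` independent of `R` and `f`. -/
theorem morrey_nikolskij (n : ℕ) (u p s q v c0 : ℝ)
    (hu : 1 < u) (hup : u ≤ p)
    (hs : 1 < s) (hsq : s ≤ q)
    (hv : 1 < v) (hvu : v ≤ u) (hc0 : 0 < c0) :
    ∃ c : ℝ, 0 < c ∧ ∀ (R : ℝ), 0 < R → ∀ f : Eu n → ℝ, Measurable f →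
      (∀ x, (‖f x‖₊ : ℝ≥0∞) ≤
        ENNReal.ofReal c0 * ENNReal.ofReal R ^ ((n:ℝ) / q) * morreyNorm n s q f) →
      morreyNorm n u p f ≤
        ENNReal.ofReal c * ENNReal.ofReal R ^ ((n:ℝ) / q - v * n / (q * u)) *
          (morreyNorm n s q f) ^ (1 - v / u) *
          (morreyNorm n v ((v / u) * p) f) ^ (v / u) := by
  have hu0 : (0:ℝ) < u := by linarith
  have hv0 : (0:ℝ) < v := by linarith
  have hp0 : (0:ℝ) < p := by linarith
  have hq0 : (0:ℝ) < q := by linarith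
  have hA : (0:ℝ) ≤ 1 - v / u := by
    rw [sub_nonneg]; exact div_le_one_of_le₀ hvu hu0.le
  refine ⟨c0 ^ (1 - v / u), Real.rpow_pos_of_pos hc0 _, fun R hR f hf hbd => ?_⟩
  set d : ℝ≥0∞ := ENNReal.ofReal c0 * ENNReal.ofReal R ^ ((n:ℝ) / q) * morreyNorm n s q f with hd
  have key : morreyNorm n u p f ≤ d ^ (1 - v / u) * (morreyNorm n v ((v / u) * p) f) ^ (v / u) := by
    rw [morreyNorm]
    refine iSup_le fun x => iSup_le fun r => iSup_le fun hr => ?_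
    set g := (Metric.ball x r).indicator f with hg
    have hgm : Measurable g := hf.indicator measurableSet_ball
    have hgd : ∀ y, (‖g y‖₊ : ℝ≥0∞) ≤ d := by
      intro y
      by_cases hy : y ∈ Metric.ball x r
      · rw [hg, Set.indicator_of_mem hy]; exact hbd y
      · rw [hg, Set.indicator_of_notMem hy]; simp
    have h1 := aux_nik hv0 hvu g hgm d hgd
    set V := volume (Metric.ball x r) with hV
    have hVpow : V ^ (1 / p - 1 / u) = (V ^ (1 / ((v / u) * p) - 1 / v)) ^ (v / u) := by
      rw [← ENNReal.rpow_mul]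
      congr 1
      field_simp
    calc V ^ (1 / p - 1 / u) * eLpNorm g (ENNReal.ofReal u) volume
        ≤ V ^ (1 / p - 1 / u) *
            (d ^ (1 - v / u) * (eLpNorm g (ENNReal.ofReal v) volume) ^ (v / u)) :=
          mul_le_mul_right h1 _
      _ = d ^ (1 - v / u) *
            ((V ^ (1 / ((v / u) * p) - 1 / v)) ^ (v / u) *
              (eLpNorm g (ENNReal.ofReal v) volume) ^ (v / u)) := by
          rw [hVpow]; ring
      _ = d ^ (1 - v / u) *
            (V ^ (1 / ((v / u) * p) - 1 / v) * eLpNorm g (ENNReal.ofReal v) volume) ^ (v / u) := by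
          rw [← ENNReal.mul_rpow_of_nonneg _ _ (show (0:ℝ) ≤ v / u by positivity)]
      _ ≤ d ^ (1 - v / u) * (morreyNorm n v ((v / u) * p) f) ^ (v / u) := by
          refine mul_le_mul_right (ENNReal.rpow_le_rpow ?_ (by positivity)) _
          exact le_iSup_of_le x (le_iSup_of_le r (le_iSup_of_le hr le_rfl))
  refine key.trans (le_of_eq ?_)
  rw [hd, ENNReal.mul_rpow_of_nonneg _ _ hA, ENNReal.mul_rpow_of_nonneg _ _ hA,
    ← ENNReal.rpow_mul, ENNReal.ofReal_rpow_of_pos hc0]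
  have : (n:ℝ) / q * (1 - v / u) = (n:ℝ) / q - v * n / (q * u) := by
    field_simp
  rw [this]
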